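/- arXiv:1410.1209 — 3 statements merged into one kernel-verified Lean document; each statement's English description precedes it below -/
import Mathlib

section
/- Let (E, ≺) be a finite poset with an indexed chain partition into n disjoint chains, and let (S, <) be its ES-transform, with chain partition of S into the n chains [i,0] < [i,1] < … < [i,m_i]. Then this chain partition of S satisfies conditions ω1, ω2 and ω3; consequently (S, <) is width-extensible. -/
open scoped Classical

/-- An *indexed chain partition* of a poset `E` into `n` disjoint chains:
numbers `m i ≥ 1` and maps `e i : {1,…,m i} → E` which are strictly
order-preserving (hence injective), have pairwise disjoint images, and
jointly cover `E`.  Write `(i,k)` for `e i k`. -/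
structure EventCP (E : Type*) [PartialOrder E] (n : ℕ) where
  m : Fin n → ℕ
  one_le_m : ∀ i : Fin n, 1 ≤ m i
  e : Fin n → ℕ → E
  mono : ∀ i : Fin n, ∀ k l : ℕ, 1 ≤ k → k < l → l ≤ m i → e i k < e i l
  disj : ∀ i j : Fin n, i ≠ j → ∀ k l : ℕ,
    1 ≤ k → k ≤ m i → 1 ≤ l → l ≤ m j → e i k ≠ e j l
  cover : ∀ x : E, ∃ i : Fin n, ∃ k : ℕ, 1 ≤ k ∧ k ≤ m i ∧ e i k = x

variable {E : Type*} [PartialOrder E] {n : ℕ}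

/-- The state set of the ES-transform: `S = {[i,k] : 0 ≤ k ≤ m i}`, realized
as the pairs `(i,k)` of `Fin n × ℕ` with `k ≤ m i`. -/
def EventCP.StateSet (P : EventCP E n) : Set (Fin n × ℕ) :=
  {p | p.2 ≤ P.m p.1}

/-- The ES-transform strict relation on states: `[i,r] < [j,s]` iff `r < s`
when `i = j`, and iff `r + 1 ≤ m i`, `1 ≤ s`, and `(i,r+1) ≺ (j,s)` in `E`
when `i ≠ j`. -/
def EventCP.slt (P : EventCP E n) (a b : Fin n × ℕ) : Prop :=
  if a.1 = b.1 then a.2 < b.2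
  else a.2 + 1 ≤ P.m a.1 ∧ 1 ≤ b.2 ∧ P.e a.1 (a.2 + 1) < P.e b.1 b.2

/-- Two states are *incomparable* in the ES-transform. -/
def EventCP.IncompS (P : EventCP E n) (a b : Fin n × ℕ) : Prop :=
  a ≠ b ∧ ¬ P.slt a b ∧ ¬ P.slt b a

/-- A finset of states is an *antichain* of the ES-transform `(S, <)`:
it consists of states and is pairwise incomparable. -/
def EventCP.IsACS (P : EventCP E n) (A : Finset (Fin n × ℕ)) : Prop :=
  ↑A ⊆ P.StateSet ∧ ∀ a ∈ A, ∀ b ∈ A, a ≠ b → P.IncompS a b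

/-- The *width* of the ES-transform `(S, <)`: the maximum cardinality of an
antichain. -/
noncomputable def EventCP.widthS (P : EventCP E n) : ℕ :=
  sSup {c : ℕ | ∃ A : Finset (Fin n × ℕ), P.IsACS A ∧ A.card = c}

namespace EventCP
variable {E : Type*} [PartialOrder E] {n : ℕ} (P : EventCP E n)

lemma e_le (i : Fin n) {k l : ℕ} (h1 : 1 ≤ k) (h2 : k ≤ l) (h3 : l ≤ P.m i) :
    P.e i k ≤ P.e i l := by
  rcases h2.lt_or_eq with h | h
  · exact (P.mono i k l h1 h h3).le
  · rw [h]

lemma omega3 (i j k : Fin n) (hij : i ≠ j) (hjk : j ≠ k)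
    (s t u : ℕ) (ht1 : 1 ≤ t) (hs : s ≤ P.m i) (ht : t ≤ P.m j) (hu : u ≤ P.m k)
    (h1 : P.slt (i, s) (j, t)) (h2 : P.slt (j, t - 1) (k, u)) : P.slt (i, s) (k, u) := by
  simp only [slt, if_neg hij, if_neg hjk] at h1 h2
  obtain ⟨hs1, ht1', he1⟩ := h1
  obtain ⟨-, hu1, he2⟩ := h2
  rw [Nat.sub_add_cancel ht1] at he2
  have htrans : P.e i (s + 1) < P.e k u := he1.trans he2
  by_cases hik : i = k
  · subst hik
    have hsu : s < u := by
      by_contra hsu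
      push_neg at hsu
      exact absurd htrans (P.e_le i hu1 (by omega) hs1).not_gt
    simp only [slt, if_pos rfl]
    exact hsu
  · simp only [slt, if_neg hik]
    exact ⟨hs1, hu1, htrans⟩

lemma slt_down {i j : Fin n} (hji : j ≠ i) {s t t' : ℕ} (h : t' ≤ t)
    (ht : P.slt (j, t) (i, s)) : P.slt (j, t') (i, s) := by
  simp only [slt, if_neg hji] at *
  obtain ⟨h1, h2, h3⟩ := ht
  exact ⟨by omega, h2, lt_of_le_of_lt (P.e_le j (by omega) (by omega) h1) h3⟩

lemma card_le (A : Finset (Fin n × ℕ)) (hA : P.IsACS A) :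
    A.card = (A.image Prod.fst).card ∧ A.card ≤ n := by
  have hinj : Set.InjOn Prod.fst (A : Set (Fin n × ℕ)) := by
    intro a ha b hb hab
    by_contra hne
    obtain ⟨-, hlt1, hlt2⟩ := hA.2 a ha b hb hne
    simp only [slt, hab, if_pos rfl] at hlt1 hlt2
    have h2 : a.2 ≠ b.2 := fun h => hne (Prod.ext hab h)
    have ha2 : ¬ a.2 < b.2 := hlt1
    have hb2 : ¬ b.2 < a.2 := hlt2
    omega
  have h1 : A.card = (A.image Prod.fst).card := (Finset.card_image_of_injOn hinj).symm
  refine ⟨h1, ?_⟩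
  rw [h1]
  simpa using Finset.card_le_univ (A.image Prod.fst)

lemma extend_antichain (A : Finset (Fin n × ℕ)) (hA : P.IsACS A)
    (j : Fin n) (hj : ∀ a ∈ A, a.1 ≠ j) :
    ∃ kk : ℕ, kk ≤ P.m j ∧ P.IsACS (insert (j, kk) A) ∧ (j, kk) ∉ A := by
  set f : Fin n × ℕ → ℕ := fun a => sInf {t | ¬ P.slt (j, t) a} with hf
  have hne : ∀ a ∈ A, P.m j ∈ {t | ¬ P.slt (j, t) a} := by
    intro a ha
    have hja : j ≠ a.1 := fun h => hj a ha h.symm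
    simp only [Set.mem_setOf_eq, slt, if_neg hja]
    intro hcon
    omega
  set kk : ℕ := A.sup f with hk
  have hfle : ∀ a ∈ A, f a ≤ P.m j := by
    intro a ha
    simp only [hf]
    exact Nat.sInf_le (hne a ha)
  have hfmem : ∀ a ∈ A, ¬ P.slt (j, f a) a := by
    intro a ha
    have : f a ∈ {t | ¬ P.slt (j, t) a} := by
      simp only [hf]
      exact Nat.sInf_mem ⟨P.m j, hne a ha⟩
    exact this
  have hkm : kk ≤ P.m j := Finset.sup_le hfle
  have hnotup : ∀ a ∈ A, ¬ P.slt (j, kk) a := by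
    intro a ha hcon
    have hja : j ≠ a.1 := fun h => hj a ha h.symm
    have h1 : f a ≤ kk := Finset.le_sup ha
    have h2 : P.slt (j, f a) a := by
      rcases a with ⟨i, s⟩
      exact P.slt_down hja h1 hcon
    exact hfmem a ha h2
  have hnotdn : ∀ a ∈ A, ¬ P.slt a (j, kk) := by
    rintro ⟨i, s⟩ ha hcon
    have hij : i ≠ j := hj _ ha
    have hcon' := hcon
    simp only [slt, if_neg hij] at hcon'
    obtain ⟨-, hk1, -⟩ := hcon'
    have hAne : A.Nonempty := ⟨_, ha⟩
    obtain ⟨b, hb, hfb⟩ := Finset.exists_mem_eq_sup A hAne f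
    have hjb : j ≠ b.1 := fun h => hj b hb h.symm
    have hlt : kk - 1 < f b := by rw [← hfb]; omega
    have hb2 : P.slt (j, kk - 1) b := by
      by_contra hc
      have h5 : f b ≤ kk - 1 := by
        simp only [hf]
        exact Nat.sInf_le hc
      omega
    have hs : s ≤ P.m i := hA.1 ha
    have hu : b.2 ≤ P.m b.1 := hA.1 hb
    have := P.omega3 i j b.1 hij hjb s kk b.2 hk1 hs hkm hu hcon hb2
    by_cases heq : (i, s) = b
    · rw [← heq] at this
      simp only [slt, if_pos rfl] at this
      exact lt_irrefl s this
    · exact (hA.2 _ ha b hb heq).2.1 this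
  have hnotin : (j, kk) ∉ A := fun h => hj _ h rfl
  refine ⟨kk, hkm, ⟨?_, ?_⟩, hnotin⟩
  · intro p hp
    simp only [Finset.coe_insert, Set.mem_insert_iff] at hp
    rcases hp with rfl | hp
    · exact hkm
    · exact hA.1 hp
  · intro a ha b hb hab
    simp only [Finset.mem_insert] at ha hb
    rcases ha with rfl | ha <;> rcases hb with rfl | hb
    · exact absurd rfl hab
    · exact ⟨hab, hnotup b hb, hnotdn b hb⟩
    · exact ⟨hab, hnotdn a ha, hnotup a ha⟩
    · exact hA.2 a ha b hb hab

lemma exists_full : ∀ d : ℕ, ∀ A : Finset (Fin n × ℕ), P.IsACS A → n - A.card ≤ d →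
    ∃ W, P.IsACS W ∧ W.card = n ∧ A ⊆ W := by
  intro d
  induction d with
  | zero =>
    intro A hA hd
    have := (P.card_le A hA).2
    exact ⟨A, hA, by omega, subset_rfl⟩
  | succ d ih =>
    intro A hA hd
    obtain ⟨himg, hcard⟩ := P.card_le A hA
    by_cases hn : A.card = n
    · exact ⟨A, hA, hn, subset_rfl⟩
    · have : (A.image Prod.fst) ≠ Finset.univ := by
        intro h
        rw [h] at himg
        simp at himg
        omega
      obtain ⟨j, hj⟩ : ∃ j : Fin n, j ∉ A.image Prod.fst := by
        by_contra hc
        push_neg at hc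
        exact this (Finset.eq_univ_iff_forall.2 hc)
      have hj' : ∀ a ∈ A, a.1 ≠ j := by
        intro a ha h
        exact hj (Finset.mem_image.2 ⟨a, ha, h⟩)
      obtain ⟨kk, hkm, hAC, hnotin⟩ := P.extend_antichain A hA j hj'
      have hcard' : (insert (j, kk) A).card = A.card + 1 := Finset.card_insert_of_notMem hnotin
      obtain ⟨W, hW, hWc, hsub⟩ := ih (insert (j, kk) A) hAC (by omega)
      exact ⟨W, hW, hWc, (Finset.subset_insert _ _).trans hsub⟩

lemma widthS_eq : P.widthS = n := by
  have hub : ∀ c ∈ {c : ℕ | ∃ A : Finset (Fin n × ℕ), P.IsACS A ∧ A.card = c}, c ≤ n := by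
    rintro c ⟨A, hA, rfl⟩
    exact (P.card_le A hA).2
  have hemp : P.IsACS (∅ : Finset (Fin n × ℕ)) := ⟨by simp, by simp⟩
  obtain ⟨W, hW, hWc, -⟩ := P.exists_full n ∅ hemp (by simp)
  have hmem : n ∈ {c : ℕ | ∃ A : Finset (Fin n × ℕ), P.IsACS A ∧ A.card = c} := ⟨W, hW, hWc⟩
  exact le_antisymm (csSup_le ⟨n, hmem⟩ hub) (le_csSup ⟨n, hub⟩ hmem)

end EventCP

/-- The natural chain partition of the ES-transform `(S, <)`
into the `n` chains `[i,0] < … < [i, m i]` satisfies ω₁, ω₂ and ω₃, and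
consequently `(S, <)` is width-extensible. -/
theorem ES_transform_omegas_and_widthExtensible (P : EventCP E n) [Fintype E] :
    (∀ i j : Fin n, i ≠ j → P.IncompS (i, 0) (j, 0)) ∧
    (∀ i j : Fin n, i ≠ j → P.IncompS (i, P.m i) (j, P.m j)) ∧
    (∀ i j k : Fin n, i ≠ j → j ≠ k →
      ∀ s t u : ℕ, 1 ≤ t → s ≤ P.m i → t ≤ P.m j → u ≤ P.m k →
        P.slt (i, s) (j, t) → P.slt (j, t - 1) (k, u) → P.slt (i, s) (k, u)) ∧
    (∀ A : Finset (Fin n × ℕ), P.IsACS A →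
      ∃ W : Finset (Fin n × ℕ), P.IsACS W ∧ W.card = P.widthS ∧ A ⊆ W) := by
  refine ⟨?_, ?_, ?_, ?_⟩
  · intro i j hij
    refine ⟨fun h => hij (congrArg Prod.fst h), ?_, ?_⟩ <;>
      simp [EventCP.slt, hij, hij.symm]
  · intro i j hij
    refine ⟨fun h => hij (congrArg Prod.fst h), ?_, ?_⟩ <;>
      · simp only [EventCP.slt, if_neg hij, if_neg hij.symm]
        rintro ⟨h, -⟩
        omega
  · exact fun i j k hij hjk s t u ht1 hs ht hu h1 h2 =>
      P.omega3 i j k hij hjk s t u ht1 hs ht hu h1 h2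
  · intro A hA
    obtain ⟨W, hW, hWc, hsub⟩ := P.exists_full n A hA (by omega)
    exact ⟨W, hW, by rw [P.widthS_eq]; exact hWc, hsub⟩
end

section
/- Let (E, ≺) be a finite poset with an indexed chain partition into n disjoint chains, and let (S, <) be its ES-transform, with chain partition of S into the n chains [i,0] < [i,1] < … < [i,m_i]. Then this chain partition of S satisfies condition ψ: for all i ≠ j and all indices s, t with 1 ≤ s and 1 ≤ t, if [i,s−1] < [j,t] then ¬([j,t−1] < [i,s]). -/
open scoped Classical

variable {E : Type*} [PartialOrder E] {n : ℕ}

/-- The natural chain partition of the ES-transform `(S, <)`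
satisfies condition ψ: for `i ≠ j`, `1 ≤ s`, `1 ≤ t`, if `[i,s-1] < [j,t]`
then `¬([j,t-1] < [i,s])`. -/
theorem ES_transform_psi (P : EventCP E n) [Fintype E] :
    ∀ i j : Fin n, i ≠ j →
      ∀ s t : ℕ, 1 ≤ s → 1 ≤ t → s ≤ P.m i → t ≤ P.m j →
        P.slt (i, s - 1) (j, t) → ¬ P.slt (j, t - 1) (i, s) := by
  intro i j hij s t hs ht hsm htm h1 h2
  unfold EventCP.slt at h1 h2
  simp only [hij, Ne.symm hij, if_neg, if_false] at h1 h2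
  obtain ⟨_, _, hlt1⟩ := h1
  obtain ⟨_, _, hlt2⟩ := h2
  rw [Nat.sub_add_cancel hs] at hlt1
  rw [Nat.sub_add_cancel ht] at hlt2
  exact absurd (hlt1.trans hlt2) (lt_irrefl _)
end

section
/- Let (S, <) be a finite poset of width w that is width-extensible and interleaving-consistent, equipped with an indexed chain partition into exactly w chains with each m_i ≥ 1. Then the SE-transform relation → on the event set E = { (i,k) : 1 ≤ i ≤ w, 1 ≤ k ≤ m_i } is a strict partial order: it is irreflexive and transitive. -/
open scoped Classical

/-- Two elements of a poset are *incomparable*: they are distinct and neither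
is strictly below the other. -/
def Incomp {α : Type*} [PartialOrder α] (a b : α) : Prop :=
  a ≠ b ∧ ¬ a < b ∧ ¬ b < a

/-- A finset is an *antichain*: its elements are pairwise incomparable. -/
def IsAC {α : Type*} [PartialOrder α] (A : Finset α) : Prop :=
  ∀ a ∈ A, ∀ b ∈ A, a ≠ b → Incomp a b

/-- The *width* of a finite poset: the maximum cardinality of an antichain. -/
noncomputable def posetWidth (α : Type*) [PartialOrder α] [Fintype α] : ℕ :=
  sSup {c : ℕ | ∃ A : Finset α, IsAC A ∧ A.card = c}

/-- A *width-antichain*: an antichain whose cardinality equals the width. -/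
def IsWidthAC {α : Type*} [PartialOrder α] [Fintype α] (A : Finset α) : Prop :=
  IsAC A ∧ A.card = posetWidth α

/-- A finite poset is *width-extensible* if every antichain is contained in
some width-antichain. -/
def WidthExtensible (α : Type*) [PartialOrder α] [Fintype α] : Prop :=
  ∀ A : Finset α, IsAC A → ∃ W : Finset α, IsWidthAC W ∧ A ⊆ W

/-- An *indexed chain partition* of a poset `α` into `n` chains: numbers
`m i` and maps `c i : {0,…,m i} → α` which are strictly order-preserving
(hence injective), have pairwise disjoint images, and jointly cover `α`. -/
structure ChainPartition (α : Type*) [PartialOrder α] (n : ℕ) where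
  m : Fin n → ℕ
  c : Fin n → ℕ → α
  mono : ∀ i : Fin n, ∀ k l : ℕ, k < l → l ≤ m i → c i k < c i l
  disj : ∀ i j : Fin n, i ≠ j → ∀ k l : ℕ, k ≤ m i → l ≤ m j → c i k ≠ c j l
  cover : ∀ x : α, ∃ i : Fin n, ∃ k : ℕ, k ≤ m i ∧ c i k = x

/-- Condition ω₁ : all initial states are pairwise incomparable. -/
def ChainPartition.Om1 {α : Type*} [PartialOrder α] {n : ℕ} (P : ChainPartition α n) : Prop :=
  ∀ i j : Fin n, i ≠ j → Incomp (P.c i 0) (P.c j 0)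

/-- Condition ω₂ : all final states are pairwise incomparable. -/
def ChainPartition.Om2 {α : Type*} [PartialOrder α] {n : ℕ} (P : ChainPartition α n) : Prop :=
  ∀ i j : Fin n, i ≠ j → Incomp (P.c i (P.m i)) (P.c j (P.m j))

/-- Condition ω₃ : if `[i,s] < [j,t]` and `[j,t-1] < [k,u]` then `[i,s] < [k,u]`
(for `i ≠ j`, `j ≠ k`, `1 ≤ t`). -/
def ChainPartition.Om3 {α : Type*} [PartialOrder α] {n : ℕ} (P : ChainPartition α n) : Prop :=
  ∀ i j k : Fin n, i ≠ j → j ≠ k →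
    ∀ s t u : ℕ, 1 ≤ t → s ≤ P.m i → t ≤ P.m j → u ≤ P.m k →
      P.c i s < P.c j t → P.c j (t - 1) < P.c k u → P.c i s < P.c k u

/-- Condition ψ : if `[i,s-1] < [j,t]` then `¬([j,t-1] < [i,s])`
(for `i ≠ j`, `1 ≤ s`, `1 ≤ t`). -/
def ChainPartition.Psi {α : Type*} [PartialOrder α] {n : ℕ} (P : ChainPartition α n) : Prop :=
  ∀ i j : Fin n, i ≠ j →
    ∀ s t : ℕ, 1 ≤ s → 1 ≤ t → s ≤ P.m i → t ≤ P.m j →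
      P.c i (s - 1) < P.c j t → ¬ P.c j (t - 1) < P.c i s

/-- Order on (width-)antichains: `A ≤ B` iff every element of `A` is below
some element of `B`. -/
def ACle {α : Type*} [PartialOrder α] (A B : Finset α) : Prop :=
  ∀ a ∈ A, ∃ b ∈ B, a ≤ b

/-- A finite poset is *interleaving-consistent* if every width-antichain `W`
that is strictly below some width-antichain can be advanced to a
width-antichain `W'` differing from `W` in exactly one element. -/
def InterleavingConsistent (α : Type*) [PartialOrder α] [Fintype α] : Prop :=
  ∀ W : Finset α, IsWidthAC W →
    (∃ W'' : Finset α, IsWidthAC W'' ∧ ACle W W'' ∧ W ≠ W'') →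
    ∃ W' : Finset α, IsWidthAC W' ∧ ACle W W' ∧ W ≠ W' ∧ (W ∩ W').card = W.card - 1

/-- The SE-transform relation on events `(i,k)`, `1 ≤ k ≤ m i`:
`(i,r) → (j,s)` iff `r < s` when `i = j`, and `[i,r-1] < [j,s]` when `i ≠ j`. -/
def SElt {α : Type*} [PartialOrder α] {n : ℕ} (P : ChainPartition α n)
    (a b : Fin n × ℕ) : Prop :=
  if a.1 = b.1 then a.2 < b.2 else P.c a.1 (a.2 - 1) < P.c b.1 b.2

/-- The SE-transform event set `{(i,k) : 1 ≤ k ≤ m i}`. -/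
def SEventSet {α : Type*} [PartialOrder α] {n : ℕ} (P : ChainPartition α n) :
    Set (Fin n × ℕ) :=
  {p | 1 ≤ p.2 ∧ p.2 ≤ P.m p.1}


section SEAux

variable {α : Type*} [PartialOrder α] [Fintype α] {n : ℕ} (P : ChainPartition α n)

lemma chain_le {p : Fin n} {a b : ℕ} (hab : a ≤ b) (hb : b ≤ P.m p) :
    P.c p a ≤ P.c p b := by
  rcases eq_or_lt_of_le hab with h | h
  · exact le_of_eq (by rw [h])
  · exact (P.mono p a b h hb).le

lemma chain_lt_reflect {p : Fin n} {a b : ℕ} (ha : a ≤ P.m p)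
    (h : P.c p a < P.c p b) : a < b := by
  by_contra hc
  push_neg at hc
  exact absurd (h.trans_le (chain_le P hc ha)) (lt_irrefl _)

lemma chain_inj {p : Fin n} {a b : ℕ} (ha : a ≤ P.m p) (hb : b ≤ P.m p)
    (h : P.c p a = P.c p b) : a = b := by
  rcases lt_trichotomy a b with h' | h' | h'
  · exact absurd (P.mono p a b h' hb) (by rw [h]; exact lt_irrefl _)
  · exact h'
  · exact absurd (P.mono p b a h' ha) (by rw [h]; exact lt_irrefl _)

lemma singleton_AC (x : α) : IsAC ({x} : Finset α) := by
  intro a ha b hb hab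
  simp only [Finset.mem_singleton] at ha hb
  exact absurd (ha.trans hb.symm) hab

lemma pair_AC {x y : α} (hxy : x ≠ y) (h1 : ¬ x < y) (h2 : ¬ y < x) :
    IsAC ({x, y} : Finset α) := by
  intro a ha b hb hab
  simp only [Finset.mem_insert, Finset.mem_singleton] at ha hb
  rcases ha with rfl | rfl <;> rcases hb with rfl | rfl
  · exact absurd rfl hab
  · exact ⟨hxy, h1, h2⟩
  · exact ⟨hxy.symm, h2, h1⟩
  · exact absurd rfl hab

/-- Every maximum antichain meets every chain. -/
lemma exists_mem_chain {W : Finset α} (hAC : IsAC W) (hcard : W.card = n) (p : Fin n) :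
    ∃ k, k ≤ P.m p ∧ P.c p k ∈ W := by
  choose f g h1 h2 using P.cover
  have hinj : Set.InjOn f W := by
    intro x hx y hy hxy
    by_contra hne
    have hb : g y ≤ P.m (f x) := by rw [hxy]; exact h1 y
    have ha : g x ≤ P.m (f x) := h1 x
    rcases lt_trichotomy (g x) (g y) with h | h | h
    · have hlt : x < y := by
        conv_lhs => rw [← h2 x]
        conv_rhs => rw [← h2 y, ← hxy]
        exact P.mono _ _ _ h hb
      exact (hAC x hx y hy hne).2.1 hlt
    · apply hne; rw [← h2 x, ← h2 y, hxy, h]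
    · have hlt : y < x := by
        conv_lhs => rw [← h2 y, ← hxy]
        conv_rhs => rw [← h2 x]
        exact P.mono _ _ _ h ha
      exact (hAC x hx y hy hne).2.2 hlt
  have himg : W.image f = Finset.univ := by
    apply Finset.eq_univ_of_card
    rw [Finset.card_image_of_injOn hinj, hcard, Fintype.card_fin]
  have hp : p ∈ W.image f := by rw [himg]; exact Finset.mem_univ p
  obtain ⟨x, hxW, hfx⟩ := Finset.mem_image.mp hp
  refine ⟨g x, ?_, ?_⟩
  · rw [← hfx]; exact h1 x
  · have hx := h2 x; rw [hfx] at hx; rw [hx]; exact hxW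

lemma mem_chain_unique {W : Finset α} (hAC : IsAC W) {p : Fin n} {k l : ℕ}
    (hk : k ≤ P.m p) (hl : l ≤ P.m p) (hkW : P.c p k ∈ W) (hlW : P.c p l ∈ W) :
    k = l := by
  by_contra hne
  have hne' : P.c p k ≠ P.c p l := fun h => hne (chain_inj P hk hl h)
  rcases lt_or_gt_of_ne hne with h | h
  · exact (hAC _ hkW _ hlW hne').2.1 (P.mono p k l h hl)
  · exact (hAC _ hkW _ hlW hne').2.2 (P.mono p l k h hk)

lemma eq_image_rep {W : Finset α} (hcard : W.card = n) {w : Fin n → ℕ}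
    (hwm : ∀ p, w p ≤ P.m p) (hwW : ∀ p, P.c p (w p) ∈ W) :
    W = Finset.image (fun p => P.c p (w p)) Finset.univ := by
  have hinj : Set.InjOn (fun p => P.c p (w p)) (Finset.univ : Finset (Fin n)) := by
    intro p _ q _ h
    by_contra hne
    exact P.disj p q hne _ _ (hwm p) (hwm q) h
  have hsub : Finset.image (fun p => P.c p (w p)) Finset.univ ⊆ W := by
    intro x hx
    obtain ⟨p, _, hp⟩ := Finset.mem_image.mp hx
    exact hp ▸ hwW p
  refine (Finset.eq_of_subset_of_card_le hsub ?_).symm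
  rw [Finset.card_image_of_injOn hinj, Finset.card_univ, Fintype.card_fin, hcard]

/-- No element lies strictly between consecutive elements of a chain. -/
lemma sandwich (hw : posetWidth α = n) (hwe : WidthExtensible α)
    {j : Fin n} {t : ℕ} (ht : 1 ≤ t) (htm : t ≤ P.m j)
    {x : α} (h1 : P.c j (t-1) < x) (h2 : x < P.c j t) : False := by
  obtain ⟨p, q, hq, hpq⟩ := P.cover x
  by_cases hpj : p = j
  · subst hpj
    rw [← hpq] at h1 h2
    have hq1 : t - 1 < q := chain_lt_reflect P (le_trans (Nat.sub_le t 1) htm) h1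
    have hq2 : q < t := chain_lt_reflect P hq h2
    omega
  · obtain ⟨W, hW, hsub⟩ := hwe {x} (singleton_AC x)
    have hcard : W.card = n := by rw [hW.2, hw]
    obtain ⟨r, hrm, hrW⟩ := exists_mem_chain P hW.1 hcard j
    have hxW : x ∈ W := hsub (Finset.mem_singleton_self x)
    have hne : x ≠ P.c j r := by
      rw [← hpq]; exact P.disj p j hpj q r hq hrm
    have hinc := hW.1 x hxW _ hrW hne
    by_cases hrt : r ≤ t - 1
    · exact hinc.2.2 (lt_of_le_of_lt (chain_le P hrt (le_trans (Nat.sub_le t 1) htm)) h1)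
    · push_neg at hrt
      exact hinc.2.1 (lt_of_lt_of_le h2 (chain_le P (by omega) hrm))

lemma om3_holds (hw : posetWidth α = n) (hwe : WidthExtensible α) : P.Om3 := by
  intro i j k hij hjk s t u ht hsm htm hum h1 h2
  by_contra hgoal
  by_cases hle : P.c k u ≤ P.c i s
  · exact sandwich P hw hwe ht htm (lt_of_lt_of_le h2 hle) h1
  · have hik : i ≠ k := by
      rintro rfl
      rcases lt_trichotomy s u with h | h | h
      · exact hgoal (P.mono i s u h hum)
      · exact hle (le_of_eq (by rw [h]))
      · exact hle (le_of_lt (P.mono i u s h hsm))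
    have hne : P.c i s ≠ P.c k u := P.disj i k hik s u hsm hum
    obtain ⟨W, hW, hsub⟩ := hwe _ (pair_AC hne hgoal (fun h => hle h.le))
    have hcard : W.card = n := by rw [hW.2, hw]
    obtain ⟨r, hrm, hrW⟩ := exists_mem_chain P hW.1 hcard j
    have hiW : P.c i s ∈ W := hsub (by simp)
    have hkW : P.c k u ∈ W := hsub (by simp)
    by_cases hrt : r ≤ t - 1
    · have hlt : P.c j r < P.c k u :=
        lt_of_le_of_lt (chain_le P hrt (le_trans (Nat.sub_le t 1) htm)) h2
      exact (hW.1 _ hrW _ hkW (P.disj j k hjk r u hrm hum)).2.1 hlt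
    · push_neg at hrt
      have hlt : P.c i s < P.c j r := lt_of_lt_of_le h1 (chain_le P (by omega) hrm)
      exact (hW.1 _ hiW _ hrW (P.disj i j hij s r hsm hrm)).2.1 hlt

lemma psi_aux (hw : posetWidth α = n) (hwe : WidthExtensible α)
    (hic : InterleavingConsistent α)
    {i j : Fin n} (hij : i ≠ j) {s t : ℕ} (hs : 1 ≤ s) (ht : 1 ≤ t)
    (hsm : s ≤ P.m i) (htm : t ≤ P.m j)
    (h1 : P.c i (s-1) < P.c j t) (h2 : P.c j (t-1) < P.c i s) :
    ∀ N : ℕ, ∀ W : Finset α, ∀ w : Fin n → ℕ, IsAC W → W.card = n →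
      (∀ p, w p ≤ P.m p) → (∀ p, P.c p (w p) ∈ W) →
      w i = s - 1 → w j = t - 1 →
      (∑ p, P.m p) ≤ N + ∑ p, w p → False := by
  intro N
  induction N with
  | zero =>
    intro W w hAC hcard hwm hwW hwi hwj hsum
    have hlt : ∑ p, w p < ∑ p, P.m p := by
      apply Finset.sum_lt_sum (fun p _ => hwm p)
      exact ⟨j, Finset.mem_univ j, by rw [hwj]; omega⟩
    omega
  | succ N ih =>
    intro W w hAC hcard hwm hwW hwi hwj hsum
    obtain ⟨V, hV, hVsub⟩ := hwe {P.c i s} (singleton_AC _)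
    have hVcard : V.card = n := by rw [hV.2, hw]
    obtain ⟨v, hvm, hvV⟩ : ∃ v : Fin n → ℕ, (∀ p, v p ≤ P.m p) ∧ ∀ p, P.c p (v p) ∈ V := by
      choose v ha hb using exists_mem_chain P hV.1 hVcard
      exact ⟨v, ha, hb⟩
    have hvi : v i = s :=
      mem_chain_unique P hV.1 (hvm i) hsm (hvV i) (hVsub (Finset.mem_singleton_self _))
    -- the coordinatewise join of W and V
    have hMm : ∀ p, max (w p) (v p) ≤ P.m p := fun p => max_le (hwm p) (hvm p)
    have hUinj : Set.InjOn (fun p => P.c p (max (w p) (v p)))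
        (Finset.univ : Finset (Fin n)) := by
      intro p _ q _ h
      by_contra hne
      exact P.disj p q hne _ _ (hMm p) (hMm q) h
    have hUAC : IsAC (Finset.image (fun p => P.c p (max (w p) (v p))) Finset.univ) := by
      intro a ha b hb hab
      obtain ⟨p, _, rfl⟩ := Finset.mem_image.mp ha
      obtain ⟨q, _, rfl⟩ := Finset.mem_image.mp hb
      have hpq : p ≠ q := by rintro rfl; exact hab rfl
      refine ⟨hab, ?_, ?_⟩
      · intro hlt
        rcases max_choice (w q) (v q) with h | h
        · rw [h] at hlt
          have hx : P.c p (w p) < P.c q (w q) :=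
            lt_of_le_of_lt (chain_le P (le_max_left _ _) (hMm p)) hlt
          exact (hAC _ (hwW p) _ (hwW q) (P.disj p q hpq _ _ (hwm p) (hwm q))).2.1 hx
        · rw [h] at hlt
          have hx : P.c p (v p) < P.c q (v q) :=
            lt_of_le_of_lt (chain_le P (le_max_right _ _) (hMm p)) hlt
          exact (hV.1 _ (hvV p) _ (hvV q) (P.disj p q hpq _ _ (hvm p) (hvm q))).2.1 hx
      · intro hlt
        rcases max_choice (w p) (v p) with h | h
        · rw [h] at hlt
          have hx : P.c q (w q) < P.c p (w p) :=
            lt_of_le_of_lt (chain_le P (le_max_left _ _) (hMm q)) hlt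
          exact (hAC _ (hwW q) _ (hwW p) (P.disj q p hpq.symm _ _ (hwm q) (hwm p))).2.1 hx
        · rw [h] at hlt
          have hx : P.c q (v q) < P.c p (v p) :=
            lt_of_le_of_lt (chain_le P (le_max_right _ _) (hMm q)) hlt
          exact (hV.1 _ (hvV q) _ (hvV p) (P.disj q p hpq.symm _ _ (hvm q) (hvm p))).2.1 hx
    have hUcard : (Finset.image (fun p => P.c p (max (w p) (v p))) Finset.univ).card = n := by
      rw [Finset.card_image_of_injOn hUinj, Finset.card_univ, Fintype.card_fin]
    have hWne : W ≠ Finset.image (fun p => P.c p (max (w p) (v p))) Finset.univ := by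
      intro hEq
      have hMi : max (w i) (v i) = s := by rw [hwi, hvi]; omega
      have hUi : P.c i s ∈ W := by
        rw [hEq]
        have hmem : P.c i (max (w i) (v i)) ∈
            Finset.image (fun p => P.c p (max (w p) (v p))) Finset.univ :=
          Finset.mem_image_of_mem _ (Finset.mem_univ i)
        rwa [hMi] at hmem
      have hmem2 : P.c i (s-1) ∈ W := by rw [← hwi]; exact hwW i
      have := mem_chain_unique P hAC hsm (le_trans (Nat.sub_le s 1) hsm) hUi hmem2
      omega
    have hACle : ACle W (Finset.image (fun p => P.c p (max (w p) (v p))) Finset.univ) := by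
      intro a haW
      have ha' : a ∈ Finset.image (fun p => P.c p (w p)) Finset.univ := by
        rw [← eq_image_rep P hcard hwm hwW]; exact haW
      obtain ⟨p, _, rfl⟩ := Finset.mem_image.mp ha'
      exact ⟨P.c p (max (w p) (v p)), Finset.mem_image_of_mem _ (Finset.mem_univ p),
        chain_le P (le_max_left _ _) (hMm p)⟩
    obtain ⟨W', hW', hle', hne', hcard'⟩ := hic W ⟨hAC, by rw [hcard, hw]⟩
      ⟨_, ⟨hUAC, by rw [hUcard, hw]⟩, hACle, hWne⟩
    have hW'card : W'.card = n := by rw [hW'.2, hw]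
    obtain ⟨w', hw'm, hw'W⟩ : ∃ w' : Fin n → ℕ, (∀ p, w' p ≤ P.m p) ∧ ∀ p, P.c p (w' p) ∈ W' := by
      choose w' ha hb using exists_mem_chain P hW'.1 hW'card
      exact ⟨w', ha, hb⟩
    have hpt : ∀ p, w p ≤ w' p := by
      intro p
      obtain ⟨b, hbW', hab⟩ := hle' (P.c p (w p)) (hwW p)
      by_contra hc
      push_neg at hc
      have h3 : P.c p (w' p) < b := lt_of_lt_of_le (P.mono p _ _ hc (hwm p)) hab
      exact (hW'.1 _ (hw'W p) _ hbW' (ne_of_lt h3)).2.1 h3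
    have hWrep := eq_image_rep P hcard hwm hwW
    have hW'rep := eq_image_rep P hW'card hw'm hw'W
    have hinter : W ∩ W' =
        (Finset.univ.filter (fun p => w p = w' p)).image (fun p => P.c p (w p)) := by
      ext x
      constructor
      · intro hx
        obtain ⟨hx1, hx2⟩ := Finset.mem_inter.mp hx
        rw [hWrep] at hx1
        obtain ⟨p, _, rfl⟩ := Finset.mem_image.mp hx1
        rw [hW'rep] at hx2
        obtain ⟨q, _, hq⟩ := Finset.mem_image.mp hx2
        have hqp : q = p := by
          by_contra hne
          exact P.disj q p hne _ _ (hw'm q) (hwm p) hq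
        subst hqp
        have heq : w' q = w q := chain_inj P (hw'm q) (hwm q) hq
        exact Finset.mem_image_of_mem _ (Finset.mem_filter.mpr ⟨Finset.mem_univ q, heq.symm⟩)
      · intro hx
        obtain ⟨p, hpD, rfl⟩ := Finset.mem_image.mp hx
        have hpd := (Finset.mem_filter.mp hpD).2
        exact Finset.mem_inter.mpr ⟨hwW p, by rw [hpd]; exact hw'W p⟩
    have hDinj : Set.InjOn (fun p => P.c p (w p))
        (Finset.univ.filter (fun p => w p = w' p) : Finset (Fin n)) := by
      intro p _ q _ h
      by_contra hne
      exact P.disj p q hne _ _ (hwm p) (hwm q) h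
    have hDcard : (Finset.univ.filter (fun p => w p = w' p)).card = n - 1 := by
      rw [← Finset.card_image_of_injOn hDinj, ← hinter, hcard', hcard]
    have hn1 : 1 ≤ n := i.pos
    have hcompl : (Finset.univ \ Finset.univ.filter (fun p => w p = w' p)).card = 1 := by
      rw [Finset.card_sdiff_of_subset (Finset.filter_subset _ _), Finset.card_univ, Fintype.card_fin,
        hDcard]
      omega
    obtain ⟨p0, hp0⟩ := Finset.card_eq_one.mp hcompl
    have hp0ne : w p0 ≠ w' p0 := by
      have hmem : p0 ∈ Finset.univ \ Finset.univ.filter (fun p => w p = w' p) := by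
        rw [hp0]; exact Finset.mem_singleton_self _
      have hmem2 := (Finset.mem_sdiff.mp hmem).2
      simpa using hmem2
    have hagree : ∀ p, p ≠ p0 → w p = w' p := by
      intro p hp
      by_contra hc
      have hpm : p ∈ Finset.univ \ Finset.univ.filter (fun q => w q = w' q) := by
        simp [hc]
      rw [hp0] at hpm
      exact hp (Finset.mem_singleton.mp hpm)
    have hp0lt : w p0 < w' p0 := lt_of_le_of_ne (hpt p0) hp0ne
    by_cases hpi : p0 = i
    · subst hpi
      have hjW' : P.c j (t-1) ∈ W' := by
        rw [← hwj, hagree j hij.symm]; exact hw'W j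
      have hsle : s ≤ w' p0 := by omega
      have hcomp : P.c j (t-1) < P.c p0 (w' p0) :=
        lt_of_lt_of_le h2 (chain_le P hsle (hw'm p0))
      exact (hW'.1 _ hjW' _ (hw'W p0)
        (P.disj j p0 hij.symm _ _ (le_trans (Nat.sub_le t 1) htm) (hw'm p0))).2.1 hcomp
    · by_cases hpj : p0 = j
      · subst hpj
        have hiW' : P.c i (s-1) ∈ W' := by
          rw [← hwi, hagree i (fun h => hpi h.symm)]; exact hw'W i
        have htle : t ≤ w' p0 := by omega
        have hcomp : P.c i (s-1) < P.c p0 (w' p0) :=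
          lt_of_lt_of_le h1 (chain_le P htle (hw'm p0))
        exact (hW'.1 _ hiW' _ (hw'W p0)
          (P.disj i p0 hij _ _ (le_trans (Nat.sub_le s 1) hsm) (hw'm p0))).2.1 hcomp
      · apply ih W' w' hW'.1 hW'card hw'm hw'W
        · rw [← hagree i (fun h => hpi h.symm)]; exact hwi
        · rw [← hagree j (fun h => hpj h.symm)]; exact hwj
        · have hlt : ∑ p, w p < ∑ p, w' p :=
            Finset.sum_lt_sum (fun p _ => hpt p) ⟨p0, Finset.mem_univ _, hp0lt⟩
          omega

lemma psi_holds (hw : posetWidth α = n) (hwe : WidthExtensible α)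
    (hic : InterleavingConsistent α) : P.Psi := by
  intro i j hij s t hs ht hsm htm h1 h2
  by_cases hcomp1 : P.c i (s-1) < P.c j (t-1)
  · obtain ⟨W, hW, hsub⟩ := hwe {P.c j (t-1)} (singleton_AC _)
    have hcard : W.card = n := by rw [hW.2, hw]
    obtain ⟨k, hkm, hkW⟩ := exists_mem_chain P hW.1 hcard i
    have hjW : P.c j (t-1) ∈ W := hsub (Finset.mem_singleton_self _)
    have hne : P.c i k ≠ P.c j (t-1) :=
      P.disj i j hij _ _ hkm (le_trans (Nat.sub_le t 1) htm)
    have hinc := hW.1 _ hkW _ hjW hne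
    by_cases hks : k ≤ s - 1
    · exact hinc.2.1 (lt_of_le_of_lt (chain_le P hks (le_trans (Nat.sub_le s 1) hsm)) hcomp1)
    · push_neg at hks
      exact hinc.2.2 (lt_of_lt_of_le h2 (chain_le P (by omega) hkm))
  by_cases hcomp2 : P.c j (t-1) < P.c i (s-1)
  · obtain ⟨W, hW, hsub⟩ := hwe {P.c i (s-1)} (singleton_AC _)
    have hcard : W.card = n := by rw [hW.2, hw]
    obtain ⟨k, hkm, hkW⟩ := exists_mem_chain P hW.1 hcard j
    have hiW : P.c i (s-1) ∈ W := hsub (Finset.mem_singleton_self _)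
    have hne : P.c j k ≠ P.c i (s-1) :=
      P.disj j i hij.symm _ _ hkm (le_trans (Nat.sub_le s 1) hsm)
    have hinc := hW.1 _ hkW _ hiW hne
    by_cases hkt : k ≤ t - 1
    · exact hinc.2.1 (lt_of_le_of_lt (chain_le P hkt (le_trans (Nat.sub_le t 1) htm)) hcomp2)
    · push_neg at hkt
      exact hinc.2.2 (lt_of_lt_of_le h1 (chain_le P (by omega) hkm))
  have hne : P.c i (s-1) ≠ P.c j (t-1) :=
    P.disj i j hij _ _ (le_trans (Nat.sub_le s 1) hsm) (le_trans (Nat.sub_le t 1) htm)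
  obtain ⟨W, hW, hsub⟩ := hwe {P.c i (s-1), P.c j (t-1)} (pair_AC hne hcomp1 hcomp2)
  have hcard : W.card = n := by rw [hW.2, hw]
  obtain ⟨w, hwm, hwW⟩ : ∃ w : Fin n → ℕ, (∀ p, w p ≤ P.m p) ∧ ∀ p, P.c p (w p) ∈ W := by
    choose w ha hb using exists_mem_chain P hW.1 hcard
    exact ⟨w, ha, hb⟩
  have hwi : w i = s - 1 :=
    mem_chain_unique P hW.1 (hwm i) (le_trans (Nat.sub_le s 1) hsm) (hwW i) (hsub (by simp))
  have hwj : w j = t - 1 :=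
    mem_chain_unique P hW.1 (hwm j) (le_trans (Nat.sub_le t 1) htm) (hwW j) (hsub (by simp))
  exact psi_aux P hw hwe hic hij hs ht hsm htm h1 h2 (∑ p, P.m p) W w hW.1 hcard hwm hwW
    hwi hwj (by omega)

end SEAux

/-- For a width-extensible and interleaving-consistent poset
with a chain partition into `width` many chains (each `m i ≥ 1`), the
SE-transform relation is irreflexive and transitive on the event set. -/
theorem SE_transform_strict_order {α : Type*} [PartialOrder α] [Fintype α]
    {n : ℕ} (P : ChainPartition α n) (hm : ∀ i : Fin n, 1 ≤ P.m i)
    (hw : posetWidth α = n) (hwe : WidthExtensible α)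
    (hic : InterleavingConsistent α) :
    (∀ a ∈ SEventSet P, ¬ SElt P a a) ∧
    (∀ a ∈ SEventSet P, ∀ b ∈ SEventSet P, ∀ c ∈ SEventSet P,
        SElt P a b → SElt P b c → SElt P a c) := by
  constructor
  · intro a _ h
    rw [SElt, if_pos rfl] at h
    exact lt_irrefl _ h
  · rintro ⟨i, r⟩ ⟨hr1, hr2⟩ ⟨j, s⟩ ⟨hs1, hs2⟩ ⟨k, u⟩ ⟨hu1, hu2⟩ hab hbc
    dsimp only at hr1 hr2 hs1 hs2 hu1 hu2
    simp only [SElt] at hab hbc ⊢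
    by_cases hij : i = j
    · subst hij
      rw [if_pos rfl] at hab
      by_cases hik : i = k
      · subst hik
        rw [if_pos rfl] at hbc ⊢
        omega
      · rw [if_neg hik] at hbc ⊢
        calc P.c i (r-1) ≤ P.c i (s-1) := chain_le P (by omega) (by omega)
          _ < P.c k u := hbc
    · rw [if_neg hij] at hab
      by_cases hjk : j = k
      · subst hjk
        rw [if_pos rfl] at hbc
        rw [if_neg hij]
        exact lt_trans hab (P.mono j s u hbc hu2)
      · rw [if_neg hjk] at hbc
        by_cases hik : i = k
        · subst hik
          rw [if_pos rfl]
          by_contra hru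
          push_neg at hru
          have hx : P.c j (s-1) < P.c i r := lt_of_lt_of_le hbc (chain_le P hru hr2)
          exact psi_holds P hw hwe hic i j hij r s hr1 hs1 hr2 hs2 hab hx
        · rw [if_neg hik]
          exact om3_holds P hw hwe i j k hij hjk (r-1) s u hs1 (by omega) hs2 hu2 hab hbc
end
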